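/- For any ξ ∈ ℝ², d ∈ (0,1/3), and points x, y, z̄ ∈ ℝ² with z̄ = (x+y)/2 and |x−y| = d, it holds that ∫_{2d < |z−z̄| < 1/d} ln_−|z−ξ| / |z−z̄|² dz ≤ C((ln_− d)² + ln_− d) for an absolute constant C. -/

import Mathlib

/-!
With `r = ‖z - z̄‖` and `s = ‖z - ξ‖`: `ln₋` is subadditive on products and `ln₋ t ≤ 1 / t`, so
writing `s = d · (s / d)` gives `ln₋ s ≤ ln₋ d + (d / s) 𝟙[s < d]`. As `r > 2d` on the annulus,
the integrand is dominated by `ln₋ d / r²` on the annulus plus `(d / s) 𝟙[s < d] / (4d²)`.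
Both majorants are radial (about `z̄` and about `ξ`); in polar coordinates the first integrates
to `2π ln₋ d · ln (1 / (2d²)) ≤ 4π (ln₋ d)²` and the second to `π / 2`.
-/

open MeasureTheory

noncomputable def lnm (r : ℝ) : ℝ := max (-Real.log r) 0

open Set Metric Real

local notation "ℝ²" => EuclideanSpace ℝ (Fin 2)

lemma lnm_nonneg (r : ℝ) : 0 ≤ lnm r := le_max_right _ _

lemma neg_log_le_lnm (r : ℝ) : -log r ≤ lnm r := le_max_left _ _

lemma lnm_of_one_le {r : ℝ} (hr : 1 ≤ r) : lnm r = 0 :=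
  max_eq_right (neg_nonpos.2 (log_nonneg hr))

lemma lnm_mul_le (a b : ℝ) : lnm (a * b) ≤ lnm a + lnm b := by
  rcases eq_or_ne a 0 with rfl | ha
  · simp [lnm]
  rcases eq_or_ne b 0 with rfl | hb
  · simp [lnm]
  rw [lnm, log_mul ha hb]
  exact max_le (by linarith [neg_log_le_lnm a, neg_log_le_lnm b])
    (add_nonneg (lnm_nonneg a) (lnm_nonneg b))

lemma lnm_le_inv {r : ℝ} (hr : 0 ≤ r) : lnm r ≤ r⁻¹ := by
  rcases hr.eq_or_lt with rfl | hr
  · simp [lnm]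
  refine max_le ?_ (inv_nonneg.2 hr.le)
  rw [← log_inv]
  linarith [log_le_sub_one_of_pos (inv_pos.2 hr)]

lemma one_le_lnm {d : ℝ} (hd : 0 < d) (hde : d ≤ exp (-1)) : 1 ≤ lnm d := by
  refine le_trans ?_ (neg_log_le_lnm d)
  rw [le_neg, ← log_exp (-1)]
  exact log_le_log hd hde

lemma lnm_le_lnm_add_indicator {d s : ℝ} (hd : 0 < d) (hs : 0 ≤ s) :
    lnm s ≤ lnm d + (Iio d).indicator (fun s => d / s) s := by
  have hsplit : lnm s ≤ lnm d + lnm (s / d) := by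
    simpa [mul_div_cancel₀ s hd.ne'] using lnm_mul_le d (s / d)
  by_cases hsd : s < d
  · have hinv := lnm_le_inv (div_nonneg hs hd.le)
    rw [inv_div] at hinv
    rw [indicator_of_mem (mem_Iio.2 hsd)]
    linarith
  · rw [lnm_of_one_le ((one_le_div hd).2 (not_lt.1 hsd))] at hsplit
    rw [indicator_of_notMem (by simpa using hsd)]
    linarith

lemma lnm_div_sq_le {d r s : ℝ} (hd : 0 < d) (hr : 2 * d < r) (hs : 0 ≤ s) :
    lnm s / r ^ 2 ≤ lnm d / r ^ 2 + (Iio d).indicator (fun s => d / s) s / (4 * d ^ 2) := by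
  have hr0 : 0 < r := by linarith
  have h4 : 4 * d ^ 2 ≤ r ^ 2 := by nlinarith
  have hind : 0 ≤ (Iio d).indicator (fun s => d / s) s :=
    indicator_apply_nonneg fun _ => div_nonneg hd.le hs
  calc lnm s / r ^ 2 ≤ (lnm d + (Iio d).indicator (fun s => d / s) s) / r ^ 2 := by
        gcongr; exact lnm_le_lnm_add_indicator hd hs
    _ ≤ lnm d / r ^ 2 + (Iio d).indicator (fun s => d / s) s / (4 * d ^ 2) := by
        rw [add_div]; gcongr

lemma log_one_div_div_two_mul_le {d : ℝ} (hd : 0 < d) : log (1 / d / (2 * d)) ≤ 2 * lnm d := by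
  rw [log_div (by positivity) (by positivity), one_div, log_inv, log_mul two_ne_zero hd.ne']
  linarith [log_nonneg one_le_two, neg_log_le_lnm d]

lemma integral_fun_norm_sub_fin_two (F : ℝ → ℝ) (c : ℝ²) :
    ∫ z : ℝ², F ‖z - c‖ = 2 * π * ∫ r in Ioi 0, r * F r := by
  rw [integral_sub_right_eq_self (fun z : ℝ² => F ‖z‖) c, integral_fun_norm_addHaar volume F]
  simp [Measure.real, pi_nonneg]
  ring

lemma integrable_fun_norm_sub_fin_two {F : ℝ → ℝ}
    (hF : IntegrableOn (fun r => r * F r) (Ioi 0)) (c : ℝ²) :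
    Integrable (fun z : ℝ² => F ‖z - c‖) :=
  ((integrable_fun_norm_addHaar volume).2
    (by simpa [finrank_euclideanSpace_fin] using hF)).comp_sub_right c

lemma integral_Ioi_mul_indicator_Ioo_div_sq {a b : ℝ} (ha : 0 < a) (hab : a ≤ b) (K : ℝ) :
    ∫ r in Ioi 0, r * (Ioo a b).indicator (fun r => K / r ^ 2) r = K * log (b / a) := by
  simp only [← indicator_mul_right _ (fun r : ℝ => r)]
  rw [setIntegral_indicator measurableSet_Ioo,
    inter_eq_right.2 (Ioo_subset_Ioi_self.trans (Ioi_subset_Ioi ha.le)),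
    ← integral_Ioc_eq_integral_Ioo, ← intervalIntegral.integral_of_le hab,
    ← integral_inv_of_pos ha (ha.trans_le hab), ← intervalIntegral.integral_const_mul]
  refine intervalIntegral.integral_congr fun r hr => ?_
  have hr0 : r ≠ 0 := (ha.trans_le (uIcc_of_le hab ▸ hr).1).ne'
  field_simp

lemma integrableOn_Ioi_mul_indicator_Ioo_div_sq {a b : ℝ} (ha : 0 < a) (K : ℝ) :
    IntegrableOn (fun r => r * (Ioo a b).indicator (fun r => K / r ^ 2) r) (Ioi 0) := by
  simp only [← indicator_mul_right _ (fun r : ℝ => r)]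
  rw [integrableOn_indicator_iff measurableSet_Ioo]
  refine (ContinuousOn.integrableOn_Icc ?_).mono_set (inter_subset_left.trans Ioo_subset_Icc_self)
  exact continuousOn_id.mul
    (continuousOn_const.div (by fun_prop) fun r hr => (pow_pos (ha.trans_le hr.1) 2).ne')

lemma integral_Ioi_mul_indicator_Iio_div {d : ℝ} (hd : 0 ≤ d) :
    ∫ r in Ioi 0, r * (Iio d).indicator (fun r => d / r) r = d ^ 2 := by
  simp only [← indicator_mul_right _ (fun r : ℝ => r)]
  rw [setIntegral_indicator measurableSet_Iio, Ioi_inter_Iio,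
    setIntegral_congr_fun measurableSet_Ioo (g := fun _ => d)
      fun r hr => mul_div_cancel₀ d hr.1.ne', setIntegral_const]
  simp [hd, sq]

lemma integrableOn_Ioi_mul_indicator_Iio_div (d : ℝ) :
    IntegrableOn (fun r => r * (Iio d).indicator (fun r => d / r) r) (Ioi 0) := by
  simp only [← indicator_mul_right _ (fun r : ℝ => r)]
  rw [integrableOn_indicator_iff measurableSet_Iio, Iio_inter_Ioi]
  exact (integrableOn_const (C := d) measure_Ioo_lt_top.ne).congr_fun
    (fun r hr => (mul_div_cancel₀ d hr.1.ne').symm) measurableSet_Ioo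

lemma setIntegral_annulus_lnm_div_sq_le (c ξ : ℝ²) {d : ℝ} (hd : 0 < d) (hde : d ≤ exp (-1)) :
    ∫ z in {z : ℝ² | 2 * d < ‖z - c‖ ∧ ‖z - c‖ < 1 / d}, lnm ‖z - ξ‖ / ‖z - c‖ ^ 2
      ≤ 4 * π * (lnm d ^ 2 + lnm d) := by
  set A := {z : ℝ² | 2 * d < ‖z - c‖ ∧ ‖z - c‖ < 1 / d}
  set F : ℝ → ℝ := (Ioo (2 * d) (1 / d)).indicator fun r => lnm d / r ^ 2
  set G : ℝ → ℝ := (Iio d).indicator fun s => d / s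
  have hA : MeasurableSet A := by unfold A; measurability
  have hFi : Integrable fun z => F ‖z - c‖ :=
    integrable_fun_norm_sub_fin_two (integrableOn_Ioi_mul_indicator_Ioo_div_sq (by positivity) _) c
  have hGi : Integrable fun z => G ‖z - ξ‖ / (4 * d ^ 2) :=
    (integrable_fun_norm_sub_fin_two (integrableOn_Ioi_mul_indicator_Iio_div d) ξ).div_const _
  have hmajor : A.indicator (fun z => lnm ‖z - ξ‖ / ‖z - c‖ ^ 2)
      ≤ fun z => F ‖z - c‖ + G ‖z - ξ‖ / (4 * d ^ 2) := by
    refine indicator_le' (fun z hz => ?_) fun z _ => ?_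
    · have hFz : F ‖z - c‖ = lnm d / ‖z - c‖ ^ 2 := indicator_of_mem (s := Ioo _ _) hz _
      rw [hFz]
      exact lnm_div_sq_le hd hz.1 (norm_nonneg _)
    · exact add_nonneg (indicator_apply_nonneg fun _ => div_nonneg (lnm_nonneg d) (sq_nonneg _))
        (div_nonneg (indicator_apply_nonneg fun _ => div_nonneg hd.le (norm_nonneg _))
          (by positivity))
  have h2d : 2 * d ≤ 1 / d := by
    rw [le_div_iff₀ hd]; nlinarith [exp_neg_one_lt_half]
  have hlog := log_one_div_div_two_mul_le hd
  have hlnm := one_le_lnm hd hde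
  calc ∫ z in A, lnm ‖z - ξ‖ / ‖z - c‖ ^ 2
      ≤ ∫ z, (F ‖z - c‖ + G ‖z - ξ‖ / (4 * d ^ 2)) := by
        rw [← integral_indicator hA]
        exact integral_mono_of_nonneg (ae_of_all _ (indicator_nonneg
          fun z _ => div_nonneg (lnm_nonneg _) (sq_nonneg _))) (hFi.add hGi) (ae_of_all _ hmajor)
    _ = 2 * π * (lnm d * log (1 / d / (2 * d))) + 2 * π * d ^ 2 / (4 * d ^ 2) := by
        rw [integral_add hFi hGi, integral_div, integral_fun_norm_sub_fin_two,
          integral_fun_norm_sub_fin_two, integral_Ioi_mul_indicator_Ioo_div_sq (by positivity) h2d,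
          integral_Ioi_mul_indicator_Iio_div hd.le]
    _ ≤ 4 * π * (lnm d ^ 2 + lnm d) := by
        rw [mul_div_assoc, div_mul_cancel_right₀ (pow_ne_zero 2 hd.ne')]
        nlinarith [pi_pos, mul_le_mul_of_nonneg_left hlog (mul_nonneg pi_pos.le (lnm_nonneg d))]

theorem annulus_log_integral_bound :
    ∃ C > 0, ∀ (ξ x y : EuclideanSpace ℝ (Fin 2)) (d : ℝ),
      0 < d → d < 1 / 3 → ‖x - y‖ = d →
      ∫ z in {z : EuclideanSpace ℝ (Fin 2) |
          2 * d < ‖z - (2:ℝ)⁻¹ • (x + y)‖ ∧ ‖z - (2:ℝ)⁻¹ • (x + y)‖ < 1 / d},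
        lnm ‖z - ξ‖ / ‖z - (2:ℝ)⁻¹ • (x + y)‖ ^ 2 ≤
          C * ((lnm d) ^ 2 + lnm d) :=
  ⟨4 * π, by positivity, fun ξ x y d hd hd3 _ =>
    setIntegral_annulus_lnm_div_sq_le _ ξ hd (by linarith [exp_neg_one_gt_d9])⟩
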